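/- Let U be a unit interval order and G = inc(U). Then the G-power sum symmetric function p_k^G = φ_G(p_k) satisfies p_k^G = Σ over correct sequences (w_1,...,w_k) of elements of U of the product w_1 · w_2 ··· w_k. In particular p_k^G has nonnegative integer coefficients as a polynomial in the vertex variables. -/

import Mathlib

open scoped Classical

/-- The image `φ(p_k)` of the `k`-th power sum under the ring homomorphism
determined by `e_i ↦ e i`, defined via Newton's identity
`p_k = e_1 p_{k-1} - e_2 p_{k-2} + ⋯ + (-1)^{k-1} k e_k`. -/
noncomputable def pG {R : Type*} [CommRing R] (e : ℕ → R) : ℕ → R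
  | 0 => 0
  | (k + 1) =>
    (-1 : R) ^ k * (k + 1 : ℕ) * e (k + 1) +
      ∑ i ∈ Finset.range k, (-1 : R) ^ i * e (i + 1) * pG e (k - i)
  decreasing_by omega

/-- The `m`-th elementary `G`-symmetric polynomial for `G = inc(U)`,
`U = {v 0, ..., v (n-1)} ⊂ ℝ` a unit interval order: stable sets of the
incomparability graph are the sets of indices with pairwise distances `≥ 1`. -/
noncomputable def eGfin (n : ℕ) (v : Fin n → ℝ) (m : ℕ) : MvPolynomial (Fin n) ℤ :=
  ∑ S ∈ ((Finset.univ : Finset (Fin n)).powersetCard m).filter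
      (fun S => ∀ a ∈ S, ∀ b ∈ S, a ≠ b → 1 ≤ |v a - v b|),
    ∏ i ∈ S, MvPolynomial.X i

/-- The set of correct sequences of length `k` of elements of the unit interval
order `{v 0, ..., v (n-1)}` (as functions `Fin k → Fin n`): consecutive entries
satisfy `w_i ⊁ w_{i+1}`, and each entry `w_j` (`j ≥ 2`) has an earlier entry
`w_i ⊀ w_j`. -/
noncomputable def corrects (n k : ℕ) (v : Fin n → ℝ) : Finset (Fin k → Fin n) :=
  Finset.univ.filter (fun w =>
    (∀ i : ℕ, (h : i + 1 < k) → ¬ (v (w ⟨i + 1, h⟩) + 1 ≤ v (w ⟨i, by omega⟩))) ∧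
    (∀ j : ℕ, (h : j < k) → 0 < j →
      ∃ i : ℕ, ∃ _ : i < j, ¬ (v (w ⟨i, by omega⟩) + 1 ≤ v (w ⟨j, h⟩))))

/-!
Write `P_m` for the sum over correct sequences of length `m`. By Newton's identity it suffices
to show `∑_{i=0}^{k} (-1)^i e_i^G P_{k+1-i} = (-1)^k (k+1) e_{k+1}^G`. The left side is a signed
sum over pairs `(S, w)` of a chain `S` of `U` (a stable set of `inc(U)`) and a nonempty correct
sequence `w` with `|S| + |w| = k + 1`. If some element of `S` can be appended to `w` keeping it
correct, move the largest such element to the end of `w`; otherwise, if `|w| ≥ 2`, move the last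
entry of `w` into `S`. This is a sign-reversing involution, and what survives are the pairs
`(S, (y))` with `S ∪ {y}` a chain of size `k + 1`, which contribute `(-1)^k (k+1) e_{k+1}^G`.
-/

open Finset MvPolynomial

theorem pG_eq_of_newton {R : Type*} [CommRing R] {e P : ℕ → R} (he : e 0 = 1)
    (hP : ∀ k, ∑ i ∈ range (k + 1), (-1) ^ i * e i * P (k + 1 - i) =
      (-1) ^ k * (k + 1 : ℕ) * e (k + 1)) :
    ∀ k, 0 < k → pG e k = P k := by
  intro k
  induction k using Nat.strong_induction_on with
  | _ k ih =>
    intro hk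
    obtain ⟨k, rfl⟩ : ∃ m, k = m + 1 := ⟨k - 1, by omega⟩
    have hsum : ∑ i ∈ range k, (-1) ^ i * e (i + 1) * pG e (k - i) =
        ∑ i ∈ range k, (-1) ^ i * e (i + 1) * P (k + 1 - (i + 1)) :=
      sum_congr rfl fun i hi => by
        have := mem_range.1 hi
        rw [ih (k - i) (by omega) (by omega), Nat.add_sub_add_right]
    have hrec := hP k
    simp only [sum_range_succ', pow_succ, he, mul_neg, mul_one, neg_mul, sum_neg_distrib, pow_zero,
      one_mul, Nat.sub_zero] at hrec
    rw [pG, hsum]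
    linear_combination -hrec

namespace UnitIntervalOrder

variable {α : Type*} (v : α → ℝ)

/-- Stable sets of `inc(U)`, i.e. chains of `U`. -/
def IsStable (S : Finset α) : Prop := ∀ a ∈ S, ∀ b ∈ S, a ≠ b → 1 ≤ |v a - v b|

/-- `y` may be appended to the sequence `l`; here and below `x ≻ y` is written `v y + 1 ≤ v x`. -/
def CanFollow (l : List α) (y : α) : Prop :=
  (∀ x ∈ l.getLast?, ¬ v y + 1 ≤ v x) ∧ ∃ a ∈ l, ¬ v a + 1 ≤ v y

def IsCorrect (l : List α) : Prop :=
  ∀ j (h : j < l.length), 0 < j → CanFollow v (l.take j) l[j]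

noncomputable def blockers (S : Finset α) (l : List α) : Finset α := S.filter (CanFollow v l)

def IsTopBlocker (S : Finset α) (l : List α) (s : α) : Prop :=
  s ∈ blockers v S l ∧ ∀ t ∈ blockers v S l, v t ≤ v s

def IsMovable (o : Finset α × List α) : Prop := (blockers v o.1 o.2).Nonempty ∨ 2 ≤ o.2.length

noncomputable def weight (o : Finset α × List α) : MvPolynomial α ℤ :=
  (-1) ^ o.1.card * ((∏ a ∈ o.1, X a) * (o.2.map X).prod)

variable {v}

theorem one_le_abs_sub_iff {a b : ℝ} : 1 ≤ |a - b| ↔ a + 1 ≤ b ∨ b + 1 ≤ a := by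
  rw [le_abs']
  constructor <;> rintro (h | h) <;> [left; right; left; right] <;> linarith

theorem IsStable.mono {S T : Finset α} (hT : IsStable v T) (hST : S ⊆ T) : IsStable v S :=
  fun a ha b hb => hT a (hST ha) b (hST hb)

theorem IsStable.eq_of_abs_sub_lt_one {S : Finset α} (hS : IsStable v S) {a b : α} (ha : a ∈ S)
    (hb : b ∈ S) (h : |v a - v b| < 1) : a = b := by
  by_contra hab
  exact (hS a ha b hb hab).not_gt h

theorem IsStable.insert [DecidableEq α] {S : Finset α} (hS : IsStable v S) {y : α}
    (hy : ∀ s ∈ S, 1 ≤ |v s - v y|) : IsStable v (insert y S) := by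
  intro a ha b hb hab
  rcases mem_insert.1 ha with rfl | haS <;> rcases mem_insert.1 hb with rfl | hbS
  · exact absurd rfl hab
  · rw [abs_sub_comm]; exact hy b hbS
  · exact hy a haS
  · exact hS a haS b hbS hab

theorem notMem_of_one_le_abs_sub {S : Finset α} {y : α} (h : ∀ s ∈ S, 1 ≤ |v s - v y|) :
    y ∉ S := fun hy => by
  have := h y hy
  norm_num at this

theorem isCorrect_singleton (y : α) : IsCorrect v [y] := fun j hj hj0 => by
  simp only [List.length_singleton] at hj
  omega

theorem isCorrect_append_singleton {l : List α} (hl : l ≠ []) {y : α} :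
    IsCorrect v (l ++ [y]) ↔ IsCorrect v l ∧ CanFollow v l y := by
  have hlen : 0 < l.length := List.length_pos_iff.2 hl
  constructor
  · intro h
    refine ⟨fun j hj hj0 => ?_, ?_⟩
    · have := h j (by simp; omega) hj0
      rwa [List.take_append_of_le_length hj.le, List.getElem_append_left hj] at this
    · have := h l.length (by simp) hlen
      rwa [List.take_left' rfl, List.getElem_concat_length rfl] at this
  · rintro ⟨h, hy⟩ j hj hj0
    rw [List.length_append, List.length_singleton] at hj
    rcases Nat.lt_succ_iff_lt_or_eq.1 hj with hj | rfl
    · rw [List.take_append_of_le_length hj.le, List.getElem_append_left hj]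
      exact h j hj hj0
    · rwa [List.take_left' rfl, List.getElem_concat_length rfl]

theorem isCorrect_iff_getElem {l : List α} :
    IsCorrect v l ↔ (∀ i (h : i + 1 < l.length), ¬ v l[i + 1] + 1 ≤ v l[i]) ∧
      ∀ j (h : j < l.length), 0 < j → ∃ i, ∃ _ : i < j, ¬ v l[i] + 1 ≤ v l[j] := by
  have hlast : ∀ j (h : j < l.length), 0 < j → (l.take j).getLast? = some l[j - 1] :=
    fun j h hj0 => by simp [List.getLast?_take, Nat.pos_iff_ne_zero.1 hj0]
  constructor
  · intro h
    refine ⟨fun i hi => (h (i + 1) hi i.succ_pos).1 _ (hlast (i + 1) hi i.succ_pos),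
      fun j hj hj0 => ?_⟩
    obtain ⟨a, ha, hay⟩ := (h j hj hj0).2
    obtain ⟨i, hi, rfl⟩ := List.mem_take_iff_getElem.1 ha
    exact ⟨i, by omega, hay⟩
  · rintro ⟨h1, h2⟩ j hj hj0
    refine ⟨fun x hx => ?_, ?_⟩
    · rw [hlast j hj hj0, Option.mem_some_iff] at hx
      subst hx
      have := h1 (j - 1) (by omega)
      simpa only [Nat.sub_add_cancel hj0] using this
    · obtain ⟨i, hi, hij⟩ := h2 j hj hj0
      exact ⟨l[i], List.mem_take_iff_getElem.2 ⟨i, by omega, rfl⟩, hij⟩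

theorem mem_blockers {S : Finset α} {l : List α} {s : α} :
    s ∈ blockers v S l ↔ s ∈ S ∧ CanFollow v l s :=
  mem_filter

theorem one_le_abs_sub_of_blockers_eq_empty {S : Finset α} {l : List α} {y s : α}
    (h : blockers v S l = ∅) (hy : y ∈ l.getLast?) (hs : s ∈ S) : 1 ≤ |v s - v y| := by
  by_contra hlt
  rw [not_le, abs_sub_lt_iff] at hlt
  refine eq_empty_iff_forall_notMem.1 h s (mem_blockers.2 ⟨hs, ?_, y, List.mem_of_getLast? hy, ?_⟩)
  · intro x hx
    rw [Option.mem_unique hx hy]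
    linarith
  · linarith

theorem blockers_singleton_eq_empty {S : Finset α} {y : α} (h : ∀ s ∈ S, 1 ≤ |v s - v y|) :
    blockers v S [y] = ∅ := by
  refine eq_empty_iff_forall_notMem.2 fun s hs => ?_
  obtain ⟨hsS, hlast, a, ha, has⟩ := mem_blockers.1 hs
  rw [List.mem_singleton] at ha
  subst ha
  rcases one_le_abs_sub_iff.1 (h s hsS) with h | h
  · exact hlast a rfl h
  · exact has h

theorem IsTopBlocker.unique {S : Finset α} {l : List α} {s t : α} (hS : IsStable v S)
    (hs : IsTopBlocker v S l s) (ht : IsTopBlocker v S l t) : s = t := by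
  refine hS.eq_of_abs_sub_lt_one (mem_blockers.1 hs.1).1 (mem_blockers.1 ht.1).1 ?_
  have := hs.2 t ht.1
  have := ht.2 s hs.1
  rw [abs_sub_lt_iff]
  constructor <;> linarith

theorem exists_isTopBlocker {S : Finset α} {l : List α} (h : (blockers v S l).Nonempty) :
    ∃ s, IsTopBlocker v S l s :=
  let ⟨s, hs, hmax⟩ := exists_max_image _ v h
  ⟨s, hs, hmax⟩

section toggle

variable [DecidableEq α]

variable (v) in
noncomputable def toggle (o : Finset α × List α) : Finset α × List α :=
  if h : ∃ s, IsTopBlocker v o.1 o.2 s then (o.1.erase h.choose, o.2 ++ [h.choose])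
  else if 2 ≤ o.2.length then (o.2.getLast?.toFinset ∪ o.1, o.2.dropLast)
  else o

theorem toggle_of_isTopBlocker {S : Finset α} {l : List α} {s : α} (hS : IsStable v S)
    (hs : IsTopBlocker v S l s) : toggle v (S, l) = (S.erase s, l ++ [s]) := by
  have h : ∃ s, IsTopBlocker v S l s := ⟨s, hs⟩
  rw [toggle, dif_pos h, IsTopBlocker.unique hS h.choose_spec hs]

theorem toggle_append_singleton {S : Finset α} {d : List α} {y : α} (hd : d ≠ [])
    (hB : blockers v S (d ++ [y]) = ∅) : toggle v (S, d ++ [y]) = (insert y S, d) := by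
  have h : ¬ ∃ s, IsTopBlocker v S (d ++ [y]) s := fun ⟨s, hs⟩ => by
    simpa [hB] using hs.1
  have hlen : 2 ≤ (d ++ [y]).length := by
    have := List.length_pos_iff.2 hd
    simp only [List.length_append, List.length_singleton]
    omega
  rw [toggle, dif_neg h, if_pos hlen]
  simp only [List.getLast?_concat, Option.toFinset_some, List.dropLast_concat, ← insert_eq]

variable (v) in
structure IsTogglePair (S : Finset α) (d : List α) (y : α) : Prop where
  notMem : y ∉ S
  ne_nil : d ≠ []
  isStable : IsStable v (insert y S)
  isCorrect : IsCorrect v (d ++ [y])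
  isTopBlocker : IsTopBlocker v (insert y S) d y
  blockers_eq_empty : blockers v S (d ++ [y]) = ∅

theorem isTogglePair_of_isTopBlocker {S : Finset α} {l : List α} {s : α} (hS : IsStable v S)
    (hl : IsCorrect v l) (hne : l ≠ []) (hs : IsTopBlocker v S l s) :
    IsTogglePair v (S.erase s) l s := by
  obtain ⟨hsS, hsl⟩ := mem_blockers.1 hs.1
  refine ⟨notMem_erase s S, hne, by rwa [insert_erase hsS],
    (isCorrect_append_singleton hne).2 ⟨hl, hsl⟩, by rwa [insert_erase hsS], ?_⟩
  refine eq_empty_iff_forall_notMem.2 fun t ht => ?_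
  obtain ⟨htS, htlast, a, ha, hat⟩ := mem_blockers.1 ht
  have hst : v s + 1 ≤ v t :=
    (one_le_abs_sub_iff.1 (hS t (mem_of_mem_erase htS) s hsS (ne_of_mem_erase htS))).resolve_left
      (htlast s List.getLast?_concat)
  -- then `t` could already follow `l`, and would be a larger blocker than `s`
  have htl : CanFollow v l t := by
    refine ⟨fun x hx => by linarith [hsl.1 x hx], a, ?_, hat⟩
    rcases List.mem_append.1 ha with ha | ha
    · exact ha
    · rw [List.mem_singleton.1 ha] at hat
      exact absurd hst hat
  linarith [hs.2 t (mem_blockers.2 ⟨mem_of_mem_erase htS, htl⟩)]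

theorem isTogglePair_of_blockers_eq_empty {S : Finset α} {d : List α} {y : α}
    (hS : IsStable v S) (hl : IsCorrect v (d ++ [y])) (hd : d ≠ [])
    (hB : blockers v S (d ++ [y]) = ∅) : IsTogglePair v S d y := by
  have hsep : ∀ s ∈ S, 1 ≤ |v s - v y| := fun s hs =>
    one_le_abs_sub_of_blockers_eq_empty hB List.getLast?_concat hs
  have hyd : CanFollow v d y := ((isCorrect_append_singleton hd).1 hl).2
  refine ⟨notMem_of_one_le_abs_sub hsep, hd, hS.insert hsep, hl,
    ⟨mem_blockers.2 ⟨mem_insert_self y S, hyd⟩, fun t ht => ?_⟩, hB⟩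
  obtain ⟨htS, htd⟩ := mem_blockers.1 ht
  rcases mem_insert.1 htS with rfl | htS
  · exact le_rfl
  rcases one_le_abs_sub_iff.1 (hsep t htS) with h | h
  · linarith
  -- a blocker of `d` above `y` would also be a blocker of `d ++ [y]`
  · obtain ⟨_, a, ha, hat⟩ := htd
    refine absurd (mem_blockers.2 ⟨htS, ?_, a, List.mem_append_left _ ha, hat⟩)
      (eq_empty_iff_forall_notMem.1 hB t)
    intro x hx
    rw [List.getLast?_concat, Option.mem_some_iff] at hx
    subst hx
    linarith

namespace IsTogglePair

variable {S : Finset α} {d : List α} {y : α}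

theorem toggle_insert (h : IsTogglePair v S d y) : toggle v (insert y S, d) = (S, d ++ [y]) := by
  rw [toggle_of_isTopBlocker h.isStable h.isTopBlocker, erase_insert h.notMem]

theorem toggle_append (h : IsTogglePair v S d y) : toggle v (S, d ++ [y]) = (insert y S, d) :=
  toggle_append_singleton h.ne_nil h.blockers_eq_empty

theorem isMovable_insert (h : IsTogglePair v S d y) : IsMovable v (insert y S, d) :=
  Or.inl ⟨y, h.isTopBlocker.1⟩

theorem isMovable_append (h : IsTogglePair v S d y) : IsMovable v (S, d ++ [y]) := by
  have := List.length_pos_iff.2 h.ne_nil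
  exact Or.inr (by simp only [List.length_append, List.length_singleton]; omega)

theorem weight_insert_add_weight_append (h : IsTogglePair v S d y) :
    weight (insert y S, d) + weight (S, d ++ [y]) = 0 := by
  simp only [weight, card_insert_of_notMem h.notMem, prod_insert h.notMem, List.map_append,
    List.prod_append, List.map_cons, List.map_nil, List.prod_cons, List.prod_nil, pow_succ]
  ring

end IsTogglePair

theorem exists_isTogglePair_of_isMovable {S : Finset α} {l : List α} (hS : IsStable v S)
    (hl : IsCorrect v l) (hne : l ≠ []) (hm : IsMovable v (S, l)) :
    ∃ T d y, IsTogglePair v T d y ∧ ((S, l) = (insert y T, d) ∨ (S, l) = (T, d ++ [y])) := by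
  by_cases hB : (blockers v S l).Nonempty
  · obtain ⟨s, hs⟩ := exists_isTopBlocker hB
    refine ⟨S.erase s, l, s, isTogglePair_of_isTopBlocker hS hl hne hs, Or.inl ?_⟩
    rw [insert_erase (mem_blockers.1 hs.1).1]
  · have hlen : 2 ≤ l.length := hm.resolve_left hB
    have hd : l.dropLast ≠ [] := List.length_pos_iff.1 (by simp only [List.length_dropLast]; omega)
    rw [← List.dropLast_append_getLast hne] at hl hB ⊢
    exact ⟨S, _, _, isTogglePair_of_blockers_eq_empty hS hl hd (not_nonempty_iff_eq_empty.1 hB),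
      Or.inr rfl⟩

theorem exists_eq_singleton_of_not_isMovable {S : Finset α} {l : List α} (hS : IsStable v S)
    (hne : l ≠ []) (hm : ¬ IsMovable v (S, l)) :
    ∃ y, l = [y] ∧ y ∉ S ∧ IsStable v (insert y S) := by
  obtain ⟨hB, hlen⟩ := not_or.1 hm
  obtain ⟨y, rfl⟩ : ∃ y, l = [y] :=
    List.length_eq_one_iff.1 (by have := List.length_pos_iff.2 hne; simp only at hlen; omega)
  have hsep : ∀ s ∈ S, 1 ≤ |v s - v y| := fun s hs =>
    one_le_abs_sub_of_blockers_eq_empty (not_nonempty_iff_eq_empty.1 hB) rfl hs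
  exact ⟨y, rfl, notMem_of_one_le_abs_sub hsep, hS.insert hsep⟩

end toggle

section sums

variable [Fintype α]

variable (v) in
noncomputable def stableSets (i : ℕ) : Finset (Finset α) :=
  (univ.powersetCard i).filter (IsStable v)

variable (v) in
noncomputable def esymmInc (i : ℕ) : MvPolynomial α ℤ := ∑ S ∈ stableSets v i, ∏ a ∈ S, X a

theorem mem_stableSets {i : ℕ} {S : Finset α} :
    S ∈ stableSets v i ↔ S.card = i ∧ IsStable v S := by
  rw [stableSets, mem_filter, mem_powersetCard_univ]

theorem esymmInc_zero : esymmInc v 0 = 1 := by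
  rw [esymmInc, stableSets, powersetCard_zero, filter_singleton, if_pos (by simp [IsStable]),
    sum_singleton, prod_empty]

variable [DecidableEq α]

variable (v) in
noncomputable def correctLists (m : ℕ) : Finset (List α) :=
  (univ.filter fun w : Fin m → α => IsCorrect v (List.ofFn w)).image List.ofFn

variable (v) in
noncomputable def correctSum (m : ℕ) : MvPolynomial α ℤ :=
  ∑ l ∈ correctLists v m, (l.map X).prod

variable (v) in
noncomputable def objects (k : ℕ) : Finset (Finset α × List α) :=
  (range (k + 1)).biUnion fun i => stableSets v i ×ˢ correctLists v (k + 1 - i)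

theorem mem_correctLists {m : ℕ} {l : List α} :
    l ∈ correctLists v m ↔ l.length = m ∧ IsCorrect v l := by
  constructor
  · intro hl
    obtain ⟨w, hw, rfl⟩ := mem_image.1 hl
    exact ⟨List.length_ofFn, (mem_filter.1 hw).2⟩
  · rintro ⟨rfl, hl⟩
    exact mem_image.2 ⟨l.get, mem_filter.2 ⟨mem_univ _, by rwa [List.ofFn_get]⟩, List.ofFn_get l⟩

theorem mem_objects {k : ℕ} {o : Finset α × List α} : o ∈ objects v k ↔
    IsStable v o.1 ∧ IsCorrect v o.2 ∧ o.2 ≠ [] ∧ o.1.card + o.2.length = k + 1 := by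
  simp only [objects, mem_biUnion, mem_range, mem_product, mem_stableSets, mem_correctLists]
  constructor
  · rintro ⟨i, hi, ⟨hcard, hS⟩, hlen, hl⟩
    exact ⟨hS, hl, List.length_pos_iff.1 (by omega), by omega⟩
  · rintro ⟨hS, hl, hne, hsum⟩
    have := List.length_pos_iff.2 hne
    exact ⟨o.1.card, by omega, ⟨rfl, hS⟩, by omega, hl⟩

theorem IsTogglePair.mem_objects_insert_iff {S : Finset α} {d : List α} {y : α} {k : ℕ}
    (h : IsTogglePair v S d y) : (insert y S, d) ∈ objects v k ↔ (S, d ++ [y]) ∈ objects v k := by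
  have hd := ((isCorrect_append_singleton h.ne_nil).1 h.isCorrect).1
  simp only [mem_objects, h.isStable, h.isStable.mono (subset_insert y S), hd, h.isCorrect,
    h.ne_nil, card_insert_of_notMem h.notMem, List.length_append, List.length_singleton,
    ne_eq, List.append_eq_nil_iff, List.cons_ne_self, and_false, not_false_eq_true, true_and]
  omega

theorem sum_weight_objects (k : ℕ) : ∑ o ∈ objects v k, weight o =
    ∑ i ∈ range (k + 1), (-1) ^ i * esymmInc v i * correctSum v (k + 1 - i) := by
  rw [objects, sum_biUnion]
  · refine sum_congr rfl fun i _ => ?_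
    rw [sum_product, esymmInc, correctSum, mul_assoc, sum_mul, mul_sum]
    refine sum_congr rfl fun S hS => ?_
    rw [mul_sum, mul_sum]
    refine sum_congr rfl fun l _ => ?_
    rw [weight, (mem_stableSets.1 hS).1]
  · intro i _ j _ hij
    refine disjoint_left.2 fun o hi hj => hij ?_
    exact (mem_stableSets.1 (mem_product.1 hi).1).1.symm.trans
      (mem_stableSets.1 (mem_product.1 hj).1).1

theorem sum_weight_filter_isMovable (k : ℕ) :
    ∑ o ∈ (objects v k).filter (IsMovable v), weight o = 0 := by
  have key : ∀ o ∈ (objects v k).filter (IsMovable v),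
      toggle v o ∈ (objects v k).filter (IsMovable v) ∧ weight o + weight (toggle v o) = 0 ∧
        toggle v (toggle v o) = o ∧ toggle v o ≠ o := by
    rintro ⟨S, l⟩ ho
    obtain ⟨ho, hm⟩ := mem_filter.1 ho
    obtain ⟨hS, hl, hne, -⟩ := mem_objects.1 ho
    have hlen : ∀ {d : List α} {y : α}, d ++ [y] ≠ d := fun h => by
      simpa using congrArg List.length h
    obtain ⟨T, d, y, hp, h | h⟩ := exists_isTogglePair_of_isMovable hS hl hne hm <;>
      rw [h] at ho ⊢
    · rw [hp.toggle_insert, hp.toggle_append]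
      exact ⟨mem_filter.2 ⟨hp.mem_objects_insert_iff.1 ho, hp.isMovable_append⟩,
        hp.weight_insert_add_weight_append, rfl, fun h => hlen (congrArg Prod.snd h)⟩
    · rw [hp.toggle_append, hp.toggle_insert]
      exact ⟨mem_filter.2 ⟨hp.mem_objects_insert_iff.2 ho, hp.isMovable_insert⟩,
        by rw [add_comm, hp.weight_insert_add_weight_append], rfl,
        fun h => hlen (congrArg Prod.snd h).symm⟩
  exact sum_involution (fun o _ => toggle v o) (fun o ho => (key o ho).2.1)
    (fun o ho _ => (key o ho).2.2.2) (fun o ho => (key o ho).1) (fun o ho => (key o ho).2.2.1)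

theorem sum_sigma_eq_sum_weight_filter_not_isMovable (k : ℕ) :
    ∑ p ∈ (stableSets v (k + 1)).sigma id, (-1) ^ k * ∏ a ∈ p.1, (X a : MvPolynomial α ℤ) =
      ∑ o ∈ (objects v k).filter (¬ IsMovable v ·), weight o := by
  refine sum_bij (fun p _ => (p.1.erase p.2, [p.2])) ?_ ?_ ?_ ?_
  · rintro ⟨T, y⟩ hp
    obtain ⟨hT, hyT⟩ : T ∈ stableSets v (k + 1) ∧ y ∈ T := mem_sigma.1 hp
    obtain ⟨hcard, hTs⟩ := mem_stableSets.1 hT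
    have hsep : ∀ s ∈ T.erase y, 1 ≤ |v s - v y| := fun s hs =>
      hTs s (mem_of_mem_erase hs) y hyT (ne_of_mem_erase hs)
    refine mem_filter.2 ⟨mem_objects.2 ⟨hTs.mono (erase_subset y T), isCorrect_singleton y,
      List.cons_ne_nil _ _, by simp [card_erase_of_mem hyT, hcard]⟩, ?_⟩
    rintro (h | h)
    · simp [blockers_singleton_eq_empty hsep] at h
    · simp at h
  · rintro ⟨T, y⟩ hp ⟨T', y'⟩ hp' h
    simp only [Prod.mk.injEq, List.cons.injEq, and_true] at h
    obtain ⟨hT, rfl⟩ := h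
    have hy : y ∈ T := (mem_sigma.1 hp).2
    have hy' : y ∈ T' := (mem_sigma.1 hp').2
    rw [← insert_erase hy, hT, insert_erase hy']
  · rintro ⟨S, l⟩ ho
    obtain ⟨ho, hm⟩ := mem_filter.1 ho
    obtain ⟨hS, -, hne, hcard⟩ := mem_objects.1 ho
    obtain ⟨y, rfl, hy, hyS⟩ := exists_eq_singleton_of_not_isMovable hS hne hm
    refine ⟨⟨insert y S, y⟩, mem_sigma.2 ⟨mem_stableSets.2 ⟨?_, hyS⟩, mem_insert_self y S⟩, ?_⟩
    · simpa [card_insert_of_notMem hy] using hcard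
    · simp [erase_insert hy]
  · rintro ⟨T, y⟩ hp
    obtain ⟨hT, hyT⟩ : T ∈ stableSets v (k + 1) ∧ y ∈ T := mem_sigma.1 hp
    have hcard : (T.erase y).card = k := by
      rw [card_erase_of_mem hyT, (mem_stableSets.1 hT).1, Nat.add_sub_cancel]
    simp only [weight, hcard, List.map_cons, List.map_nil, List.prod_cons, List.prod_nil,
      mul_one, ← mul_prod_erase T X hyT]
    ring

theorem sum_weight_filter_not_isMovable (k : ℕ) :
    ∑ o ∈ (objects v k).filter (¬ IsMovable v ·), weight o =
      (-1) ^ k * ((k + 1 : ℕ) : MvPolynomial α ℤ) * esymmInc v (k + 1) := by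
  rw [← sum_sigma_eq_sum_weight_filter_not_isMovable, sum_sigma, esymmInc, mul_sum]
  refine sum_congr rfl fun T hT => ?_
  dsimp only [id]
  rw [sum_const, (mem_stableSets.1 hT).1, nsmul_eq_mul]
  ring

theorem sum_esymmInc_mul_correctSum (k : ℕ) :
    ∑ i ∈ range (k + 1), (-1) ^ i * esymmInc v i * correctSum v (k + 1 - i) =
      (-1) ^ k * ((k + 1 : ℕ) : MvPolynomial α ℤ) * esymmInc v (k + 1) := by
  rw [← sum_weight_objects, ← sum_filter_add_sum_filter_not _ (IsMovable v),
    sum_weight_filter_isMovable, zero_add, sum_weight_filter_not_isMovable]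

variable (v) in
theorem pG_esymmInc {k : ℕ} (hk : 0 < k) : pG (esymmInc v) k = correctSum v k :=
  pG_eq_of_newton esymmInc_zero sum_esymmInc_mul_correctSum k hk

end sums

theorem eGfin_eq_esymmInc (n : ℕ) (v : Fin n → ℝ) : eGfin n v = esymmInc v := by
  funext i
  rw [eGfin, esymmInc, stableSets]
  congr

theorem isCorrect_ofFn_iff {n m : ℕ} {v : Fin n → ℝ} (w : Fin m → Fin n) :
    IsCorrect v (List.ofFn w) ↔ w ∈ corrects n m v := by
  simp only [isCorrect_iff_getElem, corrects, mem_filter, mem_univ, true_and, List.length_ofFn,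
    List.getElem_ofFn]

theorem sum_corrects_eq_correctSum {n : ℕ} (v : Fin n → ℝ) (m : ℕ) :
    ∑ w ∈ corrects n m v, ∏ i, X (w i) = correctSum v m := by
  have : correctLists v m = (corrects n m v).image List.ofFn := by
    rw [correctLists]
    congr 1
    ext w
    simp only [mem_filter, mem_univ, true_and, isCorrect_ofFn_iff]
  rw [correctSum, this, sum_image fun _ _ _ _ h => List.ofFn_injective h]
  simp only [List.map_ofFn, List.prod_ofFn, Function.comp_def]

end UnitIntervalOrder

theorem MvPolynomial.coeff_prod_X_nonneg {σ ι : Type*} (s : Finset ι) (f : ι → σ)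
    (d : σ →₀ ℕ) : 0 ≤ coeff d (∏ i ∈ s, X (f i) : MvPolynomial σ ℤ) := by
  have : (∏ i ∈ s, X (f i) : MvPolynomial σ ℤ) = monomial (∑ i ∈ s, Finsupp.single (f i) 1) 1 :=
    (monomial_sum_one s _).symm
  rw [this, coeff_monomial]
  split_ifs <;> norm_num

theorem stmt10_general (n k : ℕ) (hk : 0 < k) (v : Fin n → ℝ) :
    (pG (eGfin n v) k = ∑ w ∈ corrects n k v, ∏ i : Fin k, MvPolynomial.X (w i)) ∧
    ∀ d : Fin n →₀ ℕ, 0 ≤ MvPolynomial.coeff d (pG (eGfin n v) k) := by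
  have h : pG (eGfin n v) k = ∑ w ∈ corrects n k v, ∏ i : Fin k, MvPolynomial.X (w i) := by
    rw [UnitIntervalOrder.eGfin_eq_esymmInc, UnitIntervalOrder.sum_corrects_eq_correctSum,
      UnitIntervalOrder.pG_esymmInc v hk]
  refine ⟨h, fun d => ?_⟩
  rw [h, MvPolynomial.coeff_sum]
  exact Finset.sum_nonneg fun w _ => MvPolynomial.coeff_prod_X_nonneg _ _ d

/-- for a unit interval order `U` with incomparability graph `G`,
the `G`-power sum `p_k^G = φ_G(p_k)` equals the sum, over all correct sequences
`(w_1, ..., w_k)` of elements of `U`, of the products `w_1 ⋯ w_k`; in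
particular its coefficients are nonnegative integers. -/
theorem stmt10 (n k : ℕ) (hk : 0 < k) (v : Fin n → ℝ)
    (hv : Function.Injective v) :
    (pG (eGfin n v) k = ∑ w ∈ corrects n k v, ∏ i : Fin k, MvPolynomial.X (w i)) ∧
    ∀ d : Fin n →₀ ℕ, 0 ≤ MvPolynomial.coeff d (pG (eGfin n v) k) :=
  stmt10_general n k hk v
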